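/- The U-measurable subsets of κ^ω form a σ-algebra: they are closed under complements and countable unions. -/
import Mathlib


universe u

namespace UMeas

variable {A : Type u}

/-- The first `n` values of an infinite sequence, as a list. -/
def seg (s : ℕ → A) (n : ℕ) : List A := List.ofFn (fun i : Fin n => s i)

/-- `T` is a `U`-branching tree: a set of finite sequences closed under initial
segments, containing the empty sequence, whose branching sets are in `U`. -/
def IsUTree (U : Ultrafilter A) (T : Set (List A)) : Prop :=
  ([] ∈ T) ∧ (∀ σ ∈ T, ∀ τ : List A, τ <+: σ → τ ∈ T) ∧
    ∀ σ ∈ T, {a : A | σ ++ [a] ∈ T} ∈ U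

/-- The set of infinite branches through `T`. -/
def branches (T : Set (List A)) : Set (ℕ → A) := {s | ∀ n, seg s n ∈ T}

/-- Concatenation `σ⌢s` of a finite sequence with an infinite sequence. -/
def app (σ : List A) (s : ℕ → A) : ℕ → A :=
  fun n => if h : n < σ.length then σ.get ⟨n, h⟩ else s (n - σ.length)

/-- The section `X↾σ = {s | σ⌢s ∈ X}`. -/
def sect (X : Set (ℕ → A)) (σ : List A) : Set (ℕ → A) := {s | app σ s ∈ X}

def ULarge (U : Ultrafilter A) (X : Set (ℕ → A)) : Prop :=
  ∃ T, IsUTree U T ∧ branches T ⊆ X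

def USmall (U : Ultrafilter A) (X : Set (ℕ → A)) : Prop :=
  ∃ T, IsUTree U T ∧ branches T ∩ X = ∅

def UDetermined (U : Ultrafilter A) (X : Set (ℕ → A)) : Prop :=
  ULarge U X ∨ USmall U X

def UNull (U : Ultrafilter A) (X : Set (ℕ → A)) : Prop :=
  ∀ σ : List A, USmall U (sect X σ)

def UMeasurable (U : Ultrafilter A) (X : Set (ℕ → A)) : Prop :=
  ∀ σ : List A, UDetermined U (sect X σ)

-- ### auxiliary lemmas

def shiftSeq (k : ℕ) (s : ℕ → A) : ℕ → A := fun n => s (k + n)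

lemma length_seg (s : ℕ → A) (n : ℕ) : (seg s n).length = n := by simp [seg]

lemma seg_succ (s : ℕ → A) (n : ℕ) : seg s (n + 1) = seg s n ++ [s n] := by
  rw [seg, List.ofFn_succ', List.concat_eq_append]
  simp [seg, Fin.last]

lemma seg_cons (s : ℕ → A) (n : ℕ) : seg s (n + 1) = s 0 :: seg (shiftSeq 1 s) n := by
  simp [seg, List.ofFn_succ, shiftSeq, Nat.add_comm 1]

lemma seg_add (s : ℕ → A) (k m : ℕ) : seg s (k + m) = seg s k ++ seg (shiftSeq k s) m := by
  induction m with
  | zero => simp [seg]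
  | succ m ih =>
      rw [← Nat.add_assoc, seg_succ, ih, seg_succ, List.append_assoc]
      rfl

lemma app_nil (s : ℕ → A) : app ([] : List A) s = s := by
  funext n; simp [app]

lemma sect_nil (X : Set (ℕ → A)) : sect X [] = X := by
  ext s; simp [sect, app_nil]

lemma app_seg_shift (s : ℕ → A) (k : ℕ) : app (seg s k) (shiftSeq k s) = s := by
  funext n
  by_cases h : n < k
  · simp [app, length_seg, h, seg]
  · simp only [app, length_seg, dif_neg h, shiftSeq]
    congr 1
    omega

lemma app_append (σ τ : List A) (s : ℕ → A) : app (σ ++ τ) s = app σ (app τ s) := by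
  funext n
  simp only [app, List.length_append]
  by_cases h1 : n < σ.length
  · rw [dif_pos (by omega), dif_pos h1]
    simp only [List.get_eq_getElem]
    rw [List.getElem_append_left h1]
  · rw [dif_neg h1]
    by_cases h2 : n < σ.length + τ.length
    · rw [dif_pos h2, dif_pos (by omega)]
      simp only [List.get_eq_getElem]
      rw [List.getElem_append_right (by omega)]
    · rw [dif_neg h2, dif_neg (by omega)]
      congr 1
      omega

lemma sect_sect (X : Set (ℕ → A)) (σ τ : List A) : sect (sect X σ) τ = sect X (σ ++ τ) := by
  ext s; simp [sect, app_append]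

lemma app_single_shift (s : ℕ → A) : app [s 0] (shiftSeq 1 s) = s := by
  funext n
  rcases n with _ | n
  · simp [app]
  · simp [app, shiftSeq, Nat.add_comm 1]

lemma app_snoc (σ : List A) (s : ℕ → A) :
    app (σ ++ [s 0]) (shiftSeq 1 s) = app σ s := by
  rw [app_append, app_single_shift]

lemma usmall_iff_large_compl (U : Ultrafilter A) (X : Set (ℕ → A)) :
    USmall U X ↔ ULarge U Xᶜ := by
  unfold USmall ULarge
  refine exists_congr fun T => and_congr_right fun _ => ?_
  rw [Set.subset_compl_iff_disjoint_right, Set.disjoint_iff_inter_eq_empty]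

lemma ularge_mono (U : Ultrafilter A) {X Y : Set (ℕ → A)} (h : X ⊆ Y) :
    ULarge U X → ULarge U Y := fun ⟨T, hT, hb⟩ => ⟨T, hT, hb.trans h⟩

-- key gluing lemma
lemma large_of_branch (U : Ultrafilter A) (X : Set (ℕ → A)) (σ : List A)
    (hB : {a | ULarge U (sect X (σ ++ [a]))} ∈ U) : ULarge U (sect X σ) := by
  classical
  let F : A → Set (List A) := fun a =>
    if h : ULarge U (sect X (σ ++ [a])) then h.choose else Set.univ
  have hF : ∀ a, ULarge U (sect X (σ ++ [a])) →
      IsUTree U (F a) ∧ branches (F a) ⊆ sect X (σ ++ [a]) := by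
    intro a h
    simp only [F, dif_pos h]
    exact h.choose_spec
  refine ⟨insert [] {l | ∃ a t, l = a :: t ∧ ULarge U (sect X (σ ++ [a])) ∧ t ∈ F a},
    ⟨Set.mem_insert _ _, ?_, ?_⟩, ?_⟩
  · rintro l (rfl | ⟨a, t, rfl, ha, ht⟩) τ hτ
    · rw [List.prefix_nil.mp hτ]; exact Set.mem_insert _ _
    · rcases τ with _ | ⟨b, τ⟩
      · exact Set.mem_insert _ _
      · obtain ⟨r, hr⟩ := hτ
        simp only [List.cons_append, List.cons.injEq] at hr
        obtain ⟨rfl, hr⟩ := hr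
        exact Set.mem_insert_of_mem _ ⟨b, τ, rfl, ha, (hF b ha).1.2.1 t ht τ ⟨r, hr⟩⟩
  · rintro l (rfl | ⟨a, t, rfl, ha, ht⟩)
    · refine Filter.mem_of_superset hB ?_
      intro b hb
      exact Set.mem_insert_of_mem _ ⟨b, [], rfl, hb, (hF b hb).1.1⟩
    · refine Filter.mem_of_superset ((hF a ha).1.2.2 t ht) ?_
      intro b hb
      exact Set.mem_insert_of_mem _ ⟨a, t ++ [b], rfl, ha, hb⟩
  · intro s hs
    have h1 := hs (0 + 1)
    rw [seg_cons] at h1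
    rcases h1 with h1 | ⟨a, t, h1, ha, ht⟩
    · simp at h1
    · injection h1 with e1 e2
      subst e1
      have hbr : shiftSeq 1 s ∈ branches (F (s 0)) := by
        intro m
        have hm := hs (m + 1)
        rw [seg_cons] at hm
        rcases hm with hm | ⟨a', t', hm, ha', ht'⟩
        · simp at hm
        · injection hm with f1 f2
          rw [← f1] at ht'
          rw [f2]
          exact ht'
      have hx := (hF (s 0) ha).2 hbr
      show app σ s ∈ X
      have := app_snoc σ s
      rw [← this]
      exact hx


noncomputable def wit (U : Ultrafilter A) (Y : Set (ℕ → A)) (τ : List A) : Set (List A) :=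
  @dite _ (USmall U (sect Y τ)) (Classical.dec _) (fun h => h.choose) (fun _ => Set.univ)

lemma wit_spec {U : Ultrafilter A} {Y : Set (ℕ → A)} {τ : List A}
    (h : USmall U (sect Y τ)) :
    IsUTree U (wit U Y τ) ∧ branches (wit U Y τ) ∩ sect Y τ = ∅ := by
  rw [wit, dif_pos h]
  exact h.choose_spec

lemma determined_iUnion (U : Ultrafilter A) (Y : ℕ → Set (ℕ → A))
    (hY : ∀ n, UMeasurable U (Y n)) : UDetermined U (⋃ n, Y n) := by
  classical
  set Z := ⋃ n, Y n with hZ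
  by_cases hL : ULarge U Z
  · exact Or.inl hL
  have key : ∀ τ : List A, ¬ ULarge U (sect Z τ) →
      {a | ¬ ULarge U (sect Z (τ ++ [a]))} ∈ U := by
    intro τ hτ
    by_contra hc
    have h2 : {a | ¬ ULarge U (sect Z (τ ++ [a]))}ᶜ ∈ U :=
      Ultrafilter.compl_mem_iff_notMem.mpr hc
    have h3 : {a | ULarge U (sect Z (τ ++ [a]))} ∈ U := by
      convert h2 using 1
      ext a
      simp
    exact hτ (large_of_branch U Z τ h3)
  have keysmall : ∀ τ : List A, ¬ ULarge U (sect Z τ) → ∀ n, USmall U (sect (Y n) τ) := by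
    intro τ hτ n
    rcases hY n τ with h | h
    · refine absurd (ularge_mono U (fun s hs => ?_) h) hτ
      exact Set.mem_iUnion.mpr ⟨n, hs⟩
    · exact h
  have hNLnil : ¬ ULarge U (sect Z []) := by rw [sect_nil]; exact hL
  refine Or.inr ⟨{σ | (∀ k ≤ σ.length, ¬ ULarge U (sect Z (σ.take k))) ∧
      ∀ k ≤ σ.length, ∀ n ≤ k, σ.drop k ∈ wit U (Y n) (σ.take k)}, ⟨?_, ?_, ?_⟩, ?_⟩
  · constructor
    · intro k hk
      obtain rfl := Nat.le_zero.mp hk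
      simpa using hNLnil
    · intro k hk n hn
      obtain rfl := Nat.le_zero.mp (List.length_nil ▸ hk)
      obtain rfl := Nat.le_zero.mp hn
      simp only [List.drop_nil, List.take_nil]
      exact (wit_spec (keysmall [] hNLnil 0)).1.1
  · rintro σ hσ τ ⟨r, rfl⟩
    obtain ⟨h1, h2⟩ := hσ
    have g1 : ∀ k ≤ τ.length, ¬ ULarge U (sect Z (τ.take k)) := by
      intro k hk
      have := h1 k (by rw [List.length_append]; omega)
      rwa [List.take_append_of_le_length hk] at this
    refine ⟨g1, ?_⟩
    intro k hk n hn
    have := h2 k (by rw [List.length_append]; omega) n hn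
    rw [List.take_append_of_le_length hk, List.drop_append_of_le_length hk] at this
    exact (wit_spec (keysmall _ (g1 k hk) n)).1.2.1 _ this (τ.drop k) ⟨r, rfl⟩
  · intro σ hσ
    obtain ⟨h1, h2⟩ := hσ
    have hNLσ : ¬ ULarge U (sect Z σ) := by
      have := h1 σ.length le_rfl
      rwa [List.take_length] at this
    have hS0 : {a | ¬ ULarge U (sect Z (σ ++ [a]))} ∈ U := key σ hNLσ
    have hfin : ({p : ℕ × ℕ | p.1 ≤ σ.length ∧ p.2 ≤ p.1}).Finite := by
      refine Set.Finite.subset (Set.finite_Icc (0, 0) (σ.length, σ.length)) ?_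
      rintro ⟨i, j⟩ ⟨hi, hj⟩
      simp only [Set.mem_Icc, Prod.le_def]
      omega
    have hB : (⋂ p ∈ {p : ℕ × ℕ | p.1 ≤ σ.length ∧ p.2 ≤ p.1},
        {a | σ.drop p.1 ++ [a] ∈ wit U (Y p.2) (σ.take p.1)}) ∈ U := by
      refine (Filter.biInter_mem hfin).mpr ?_
      rintro ⟨k, n⟩ ⟨hk, hn⟩
      exact (wit_spec (keysmall _ (h1 k hk) n)).1.2.2 _ (h2 k hk n hn)
    refine Filter.mem_of_superset (Filter.inter_mem hS0 hB) ?_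
    rintro a ⟨ha0, haB⟩
    have hlen : (σ ++ [a]).length = σ.length + 1 := by simp
    constructor
    · intro k hk
      by_cases hk' : k ≤ σ.length
      · rw [List.take_append_of_le_length hk']
        exact h1 k hk'
      · rw [show k = (σ ++ [a]).length by omega, List.take_length]
        exact ha0
    · intro k hk n hn
      by_cases hk' : k ≤ σ.length
      · rw [List.take_append_of_le_length hk', List.drop_append_of_le_length hk']
        exact Set.mem_iInter₂.mp haB (k, n) ⟨hk', hn⟩
      · rw [show k = (σ ++ [a]).length by omega, List.take_length, List.drop_length]
        exact (wit_spec (keysmall _ ha0 n)).1.1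
  · rw [Set.eq_empty_iff_forall_notMem]
    rintro s ⟨hsb, hsZ⟩
    obtain ⟨n, hsn⟩ := Set.mem_iUnion.mp hsZ
    have hτlen : (seg s n).length = n := length_seg s n
    have hNLτ : ¬ ULarge U (sect Z (seg s n)) := by
      have := (hsb n).1 n (le_of_eq hτlen.symm)
      rwa [List.take_of_length_le (le_of_eq hτlen)] at this
    have hbr : shiftSeq n s ∈ branches (wit U (Y n) (seg s n)) := by
      intro m
      have := (hsb (n + m)).2 n (by rw [length_seg]; omega) n le_rfl
      rw [seg_add, List.take_append_of_le_length (le_of_eq hτlen.symm),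
        List.drop_append_of_le_length (le_of_eq hτlen.symm),
        List.take_of_length_le (le_of_eq hτlen),
        List.drop_eq_nil_of_le (le_of_eq hτlen), List.nil_append] at this
      exact this
    have hsmall := (wit_spec (keysmall _ hNLτ n)).2
    refine Set.eq_empty_iff_forall_notMem.mp hsmall (shiftSeq n s) ⟨hbr, ?_⟩
    show app (seg s n) (shiftSeq n s) ∈ Y n
    rw [app_seg_shift]
    exact hsn

theorem main (U : Ultrafilter A) :
    (∀ X : Set (ℕ → A), UMeasurable U X → UMeasurable U Xᶜ) ∧
    (∀ X : ℕ → Set (ℕ → A), (∀ n, UMeasurable U (X n)) →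
      UMeasurable U (⋃ n, X n)) := by
  constructor
  · intro X hX σ
    have e : sect Xᶜ σ = (sect X σ)ᶜ := rfl
    rcases hX σ with h | h
    · right
      rw [e, usmall_iff_large_compl, compl_compl]
      exact h
    · left
      rw [e]
      exact (usmall_iff_large_compl U _).mp h
  · intro X hX σ
    have e : sect (⋃ n, X n) σ = ⋃ n, sect (X n) σ := by
      ext s; simp [sect]
    rw [e]
    exact determined_iUnion U _ (fun n τ => by rw [sect_sect]; exact hX n (σ ++ τ))


end UMeas

/-- The `U`-measurable sets form a σ-algebra: closed under complements and countable
unions. -/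
theorem stmt4 {A : Type u} (U : Ultrafilter A) :
    (∀ X : Set (ℕ → A), UMeas.UMeasurable U X → UMeas.UMeasurable U Xᶜ) ∧
    (∀ X : ℕ → Set (ℕ → A), (∀ n, UMeas.UMeasurable U (X n)) →
      UMeas.UMeasurable U (⋃ n, X n)) := UMeas.main U
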